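/- arXiv:1409.3150 — 3 statements merged into one kernel-verified Lean document; each statement's English description precedes it below -/
import Mathlib

section
/- For n even, the reduction map π_n from labelled n-regular multigraphs to unlabelled connected multigraphs has image exactly the set of connected multigraphs all of whose vertices have even degree; in particular it is surjective onto this subset. -/
/-!
Contracting a virtual edge or deleting a virtual loop preserves the parity of all degrees: the
degree of a contracted class is the sum of the degrees in it, and the virtual edges inside the
class become loops, which count twice. So a reduction of an `n`-regular graph, `n` even, has only
even degrees. Conversely, if every degree of `c` is even, blow each vertex of degree `2m` up into a
prism on `2m` ports (two virtual `m`-cycles joined by `m` virtual rungs), let each real edge of `c`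
join a port at each of its ends, and pad with virtual loops: every port gets degree `4 + 2L = n`.
A vertex of degree `0` forces the connected `c` to be a single vertex without edges, the reduction
of a bouquet of `n / 2` virtual loops.
-/

/-- A multigraph: a vertex type, an edge type, and an endpoint assignment
(loops and multi-edges allowed). -/
structure Multigraph where
  V : Type
  E : Type
  ends : E → Sym2 V

namespace Multigraph

/-- Adjacency: two vertices are adjacent when some edge has them as endpoints. -/
def Adj (G : Multigraph) (u v : G.V) : Prop := ∃ e : G.E, G.ends e = s(u, v)

/-- A multigraph is connected if it is nonempty and any two vertices are joined by a walk. -/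
def Connected (G : Multigraph) : Prop :=
  Nonempty G.V ∧ ∀ u v : G.V, Relation.ReflTransGen G.Adj u v

/-- The degree of a vertex: the number of incident edges, with loops counted twice. -/
noncomputable def degree (G : Multigraph) (v : G.V) : ℕ :=
  Nat.card {e : G.E // v ∈ G.ends e} + Nat.card {e : G.E // G.ends e = s(v, v)}

/-- Finiteness of a multigraph. -/
def IsFinite (G : Multigraph) : Prop := Finite G.V ∧ Finite G.E

end Multigraph

/-- A labelled graph: a multigraph whose edges carry a label `real`/`virtual`
(`virt e` means `e` is virtual). -/
structure LabelledGraph extends Multigraph where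
  virt : E → Prop

namespace LabelledGraph

/-- Adjacency via virtual edges only. -/
def VirtAdj (G : LabelledGraph) (u v : G.V) : Prop :=
  ∃ e : G.E, G.virt e ∧ G.toMultigraph.ends e = s(u, v)

/-- Number of loops of a labelled graph. -/
noncomputable def loopCount (G : LabelledGraph) : ℕ :=
  Nat.card {e : G.E // ∃ v : G.V, G.toMultigraph.ends e = s(v, v)}

/-- A labelled graph is loopless if no edge is a loop. -/
def Loopless (G : LabelledGraph) : Prop :=
  ∀ e : G.E, ¬ ∃ v : G.V, G.toMultigraph.ends e = s(v, v)

end LabelledGraph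

/-- `ReducesTo G c`: the unlabelled multigraph `c` is obtained from the labelled graph `G`
by contracting all virtual non-loop edges (identifying their endpoints) and deleting all
virtual loops.  `q` is the quotient map on vertices (its fibres are exactly the classes of
vertices joined by chains of virtual edges) and the real edges of `G` correspond
bijectively to the edges of `c`, compatibly with endpoints. -/
def ReducesTo (G : LabelledGraph) (c : Multigraph) : Prop :=
  ∃ (q : G.V → c.V) (fE : {e : G.E // ¬ G.virt e} ≃ c.E),
    Function.Surjective q ∧
    (∀ u v : G.V, q u = q v ↔ Relation.ReflTransGen G.VirtAdj u v) ∧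
    ∀ e : {e : G.E // ¬ G.virt e}, c.ends (fE e) = (G.toMultigraph.ends e.1).map q

theorem Equiv.card_fiber {α β : Type} (ψ : α ≃ β) (b : β) : Nat.card {a // ψ a = b} = 1 :=
  (Nat.card_congr (ψ.subtypeEquiv (q := (· = b)) fun _ => Iff.rfl)).trans Nat.card_unique

theorem card_fiber_comp_eq_sum {α β γ : Type} [Finite α] [Fintype β] [DecidableEq γ]
    (f : α → β) (q : β → γ) (c : γ) :
    Nat.card {a // q (f a) = c} = ∑ b with q b = c, Nat.card {a // f a = b} := by
  classical
  have := Fintype.ofFinite α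
  simp only [Nat.card_eq_fintype_card, Fintype.card_subtype]
  convert (Finset.sum_card_fiberwise_eq_card_filter Finset.univ {b | q b = c} f).symm using 2
  simp

theorem exists_equiv_apply_eq_of_card_fiber {α β γ : Type} [Finite α] [Finite β] {f : α → γ}
    {g : β → γ} (h : ∀ c, Nat.card {a // f a = c} = Nat.card {b // g b = c}) :
    ∃ e : α ≃ β, ∀ a, g (e a) = f a :=
  ⟨Equiv.ofFiberEquiv fun c => (Finite.card_eq.1 (h c)).some, Equiv.ofFiberEquiv_map _⟩

namespace Multigraph

theorem exists_ends_eq (G : Multigraph) :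
    ∃ src tgt : G.E → G.V, ∀ e, G.ends e = s(src e, tgt e) := by
  choose p hp using fun e => Quot.exists_rep (G.ends e)
  exact ⟨fun e => (p e).1, fun e => (p e).2, fun e => (hp e).symm⟩

theorem degree_eq_card_add_card {G : Multigraph} [Finite G.E] {src tgt : G.E → G.V}
    (h : ∀ e, G.ends e = s(src e, tgt e)) (v : G.V) :
    G.degree v = Nat.card {e // src e = v} + Nat.card {e // tgt e = v} := by
  have hmem : ∀ e, v ∈ G.ends e ↔ e ∈ {e | src e = v} ∪ {e | tgt e = v} := fun e => by
    simp [h, Sym2.mem_iff, eq_comm]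
  have hloop : ∀ e, G.ends e = s(v, v) ↔ e ∈ {e | src e = v} ∩ {e | tgt e = v} := fun e => by
    simp [h]
  simp only [degree, hmem, hloop]
  exact Set.ncard_union_add_ncard_inter _ _

theorem degree_congr {V E E' : Type} {f : E → Sym2 V} {f' : E' → Sym2 V} (σ : E ≃ E')
    (h : ∀ e, f' (σ e) = f e) (v : V) :
    (⟨V, E, f⟩ : Multigraph).degree v = (⟨V, E', f'⟩ : Multigraph).degree v := by
  simp only [degree]
  congr 1 <;> exact Nat.card_congr (σ.subtypeEquiv fun e => by rw [h])

theorem degree_sumElim {V E₁ E₂ : Type} [Finite E₁] [Finite E₂] (f₁ : E₁ → Sym2 V)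
    (f₂ : E₂ → Sym2 V) (v : V) :
    (⟨V, E₁ ⊕ E₂, Sum.elim f₁ f₂⟩ : Multigraph).degree v =
      (⟨V, E₁, f₁⟩ : Multigraph).degree v + (⟨V, E₂, f₂⟩ : Multigraph).degree v := by
  simp only [degree, Nat.card_congr Equiv.subtypeSum, Nat.card_sum, Sum.elim_inl, Sum.elim_inr]
  ring

theorem degree_matching {V M : Type} [Finite M] (ψ : M ⊕ M ≃ V) (v : V) :
    (⟨V, M, fun m => s(ψ (.inl m), ψ (.inr m))⟩ : Multigraph).degree v = 1 := by
  rw [degree_eq_card_add_card (fun _ => rfl), ← Nat.card_sum,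
    ← Nat.card_congr (Equiv.subtypeSum (p := (ψ · = v))), ψ.card_fiber]

theorem degree_perm {V : Type} [Finite V] (τ : Equiv.Perm V) (v : V) :
    (⟨V, V, fun x => s(x, τ x)⟩ : Multigraph).degree v = 2 := by
  rw [degree_eq_card_add_card (fun _ => rfl), Nat.card_unique, τ.card_fiber]

theorem degree_loops {V ι : Type} [Finite V] [Finite ι] (v : V) :
    (⟨V, ι × V, fun p => s(p.2, p.2)⟩ : Multigraph).degree v = 2 * Nat.card ι := by
  have : Nat.card {p : ι × V // p.2 = v} = Nat.card ι :=
    Nat.card_congr ⟨fun p => p.1.1, fun i => ⟨(i, v), rfl⟩, fun ⟨_, h⟩ => by subst h; rfl,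
      fun _ => rfl⟩
  rw [degree_eq_card_add_card (fun _ => rfl), this]
  ring

theorem even_degree_of_forall_isDiag (G : Multigraph) (h : ∀ e, (G.ends e).IsDiag) (v : G.V) :
    Even (G.degree v) := by
  have : ∀ e, v ∈ G.ends e ↔ G.ends e = s(v, v) := fun e => by
    rw [← Sym2.diag_diagElem (h e)]
    simp [Sym2.diag, eq_comm]
  simp only [degree, this]
  exact ⟨_, rfl⟩

theorem notMem_ends_of_degree_eq_zero {G : Multigraph} [Finite G.E] {v : G.V}
    (hv : G.degree v = 0) (e : G.E) : v ∉ G.ends e := fun h =>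
  (Finite.card_eq_zero_iff.1 (Nat.eq_zero_of_add_eq_zero_right hv)).false ⟨e, h⟩

theorem Connected.subsingleton_of_degree_eq_zero {G : Multigraph} [Finite G.E] (hG : G.Connected)
    {v : G.V} (hv : G.degree v = 0) : Subsingleton G.V := by
  have : ∀ u, u = v := fun u => by
    induction hG.2 v u with
    | refl => rfl
    | tail _ hab ih =>
      obtain ⟨e, he⟩ := hab
      subst ih
      exact absurd (he ▸ Sym2.mem_mk_left _ _) (notMem_ends_of_degree_eq_zero hv e)
  exact ⟨fun a b => (this a).trans (this b).symm⟩

theorem isEmpty_edge_of_degree_eq_zero {G : Multigraph} [Finite G.E] [Subsingleton G.V] {v : G.V}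
    (hv : G.degree v = 0) : IsEmpty G.E := by
  obtain ⟨src, tgt, hst⟩ := G.exists_ends_eq
  refine ⟨fun e => notMem_ends_of_degree_eq_zero hv e ?_⟩
  rw [hst, Subsingleton.elim v (src e)]
  exact Sym2.mem_mk_left _ _

theorem card_fiber_sumElim {G : Multigraph} [Finite G.E] {src tgt : G.E → G.V}
    (hst : ∀ e, G.ends e = s(src e, tgt e)) (v : G.V) :
    Nat.card {d : G.E ⊕ G.E // Sum.elim src tgt d = v} = G.degree v := by
  rw [Nat.card_congr Equiv.subtypeSum, Nat.card_sum, degree_eq_card_add_card hst]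
  rfl

abbrev map (G : Multigraph) {W : Type} (q : G.V → W) : Multigraph :=
  ⟨W, G.E, fun e => (G.ends e).map q⟩

theorem degree_map (G : Multigraph) [Fintype G.V] [Finite G.E] {W : Type} [DecidableEq W]
    (q : G.V → W) (w : W) : (G.map q).degree w = ∑ u with q u = w, G.degree u := by
  obtain ⟨src, tgt, h⟩ := G.exists_ends_eq
  have : Finite (G.map q).E := ‹Finite G.E›
  have hmap : ∀ e, (G.map q).ends e = s(q (src e), q (tgt e)) := fun e =>
    (congrArg (Sym2.map q) (h e)).trans (Sym2.map_mk q _ _)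
  rw [degree_eq_card_add_card hmap, card_fiber_comp_eq_sum, card_fiber_comp_eq_sum,
    ← Finset.sum_add_distrib]
  exact Finset.sum_congr rfl fun u _ => (degree_eq_card_add_card h u).symm

theorem even_degree_map (G : Multigraph) [Finite G.V] [Finite G.E] (hG : ∀ v, Even (G.degree v))
    {W : Type} (q : G.V → W) (w : W) : Even ((G.map q).degree w) := by
  classical
  have := Fintype.ofFinite G.V
  rw [degree_map]
  exact Finset.even_sum _ fun u _ => hG u

end Multigraph

open Multigraph

instance (G : LabelledGraph) : Std.Symm G.VirtAdj where
  symm _ _ := fun ⟨e, hv, he⟩ => ⟨e, hv, he.trans Sym2.eq_swap⟩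

namespace ReducesTo

variable {G : LabelledGraph} {c : Multigraph}

theorem even_degree (h : ReducesTo G c) (hG : G.IsFinite) (heven : ∀ v, Even (G.degree v))
    (w : c.V) : Even (c.degree w) := by
  classical
  obtain ⟨q, fE, -, hq, hends⟩ := h
  have := hG.1
  have := hG.2
  have hloops : ∀ e : {e // G.virt e}, ((G.ends e).map q).IsDiag := fun ⟨e, he⟩ => by
    obtain ⟨src, tgt, hst⟩ := G.exists_ends_eq
    rw [hst, Sym2.map_mk, Sym2.mk_isDiag_iff]
    exact (hq _ _).2 (.single ⟨e, he, hst e⟩)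
  have hsplit : (G.map q).degree w =
      (⟨c.V, {e // G.virt e}, fun e => (G.ends e).map q⟩ : Multigraph).degree w + c.degree w :=
    calc (G.map q).degree w
        = Multigraph.degree ⟨c.V, {e // G.virt e} ⊕ {e // ¬G.virt e},
            Sum.elim (fun e => (G.ends e).map q) (fun e => (G.ends e).map q)⟩ w :=
          (degree_congr (Equiv.sumCompl G.virt) (by rintro (_ | _) <;> rfl) w).symm
      _ = _ := by rw [degree_sumElim, degree_congr fE hends]
  have hmap := G.even_degree_map heven q w
  rw [hsplit] at hmap
  exact (Nat.even_add.1 hmap).1 (even_degree_of_forall_isDiag ⟨c.V, _, _⟩ hloops w)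

theorem connected (h : ReducesTo G c) (hc : c.Connected) : G.Connected := by
  obtain ⟨q, fE, hsurj, hq, hends⟩ := h
  have fiber : ∀ {u w}, q u = q w → Relation.ReflTransGen G.Adj u w := fun huw =>
    Relation.ReflTransGen.mono (fun _ _ ⟨e, _, he⟩ => ⟨e, he⟩) _ _ ((hq _ _).1 huw)
  have lift : ∀ {a b}, c.Adj a b → ∃ x y, q x = a ∧ q y = b ∧ G.Adj x y := by
    rintro a b ⟨e', he'⟩
    obtain ⟨⟨e, he⟩, rfl⟩ := fE.surjective e'
    obtain ⟨src, tgt, hst⟩ := G.exists_ends_eq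
    rw [hends, hst, Sym2.map_mk, Sym2.eq_iff] at he'
    rcases he' with ⟨rfl, rfl⟩ | ⟨rfl, rfl⟩
    · exact ⟨_, _, rfl, rfl, e, hst e⟩
    · exact ⟨_, _, rfl, rfl, e, (hst e).trans Sym2.eq_swap⟩
  have reach : ∀ {u a}, Relation.ReflTransGen c.Adj (q u) a →
      ∀ w, q w = a → Relation.ReflTransGen G.Adj u w := by
    intro u a hua
    induction hua with
    | refl => exact fun w hw => fiber hw.symm
    | tail _ hab ih =>
      intro w hw
      obtain ⟨x, y, rfl, rfl, hxy⟩ := lift hab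
      exact ((ih x rfl).tail hxy).trans (fiber hw.symm)
  obtain ⟨v⟩ := hc.1
  exact ⟨⟨(hsurj v).choose⟩, fun u w => reach (hc.2 _ _) w rfl⟩

end ReducesTo

abbrev LabelledGraph.virtualLoops (V : Type) (k : ℕ) : LabelledGraph where
  V := V
  E := Fin k × V
  ends p := s(p.2, p.2)
  virt _ := True

theorem reducesTo_virtualLoops (c : Multigraph) [Subsingleton c.V] [IsEmpty c.E] (k : ℕ) :
    ReducesTo (.virtualLoops c.V k) c := by
  have : IsEmpty {e : Fin k × c.V // ¬True} := ⟨fun e => e.2 trivial⟩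
  exact ⟨id, Equiv.equivOfIsEmpty _ _, Function.surjective_id,
    fun u w => ⟨fun h => (show u = w from h) ▸ .refl, fun _ => Subsingleton.elim u w⟩,
    fun e => (e.2 trivial).elim⟩

theorem LabelledGraph.degree_virtualLoops (V : Type) [Finite V] (k : ℕ) (v : V) :
    (virtualLoops V k).degree v = 2 * k :=
  (degree_loops v).trans (by rw [Nat.card_fin])

namespace Multigraph

variable (c : Multigraph) (μ : c.V → ℕ)

abbrev Rung := Σ v : c.V, Fin (μ v + 1)

abbrev Port := c.Rung μ ⊕ c.Rung μ

def portBase : c.Port μ → c.V := Sum.elim Sigma.fst Sigma.fst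

def portSucc : Equiv.Perm (c.Port μ) :=
  let cyc : Equiv.Perm (c.Rung μ) := Equiv.sigmaCongrRight fun v => finRotate (μ v + 1)
  cyc.sumCongr cyc

/-- Each vertex `v` of `c`, of degree `2 * (μ v + 1)`, is blown up into a prism: two virtual
`(μ v + 1)`-cycles of ports joined by virtual rungs. Each port carries one real edge (through `φ`)
and `L` virtual loops. -/
def ladder (L : ℕ) (φ : c.E ⊕ c.E ≃ c.Port μ) : LabelledGraph where
  V := c.Port μ
  E := c.E ⊕ c.Rung μ ⊕ c.Port μ ⊕ Fin L × c.Port μ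
  ends := Sum.elim (fun e => s(φ (.inl e), φ (.inr e))) <| Sum.elim (fun r => s(.inl r, .inr r)) <|
    Sum.elim (fun x => s(x, c.portSucc μ x)) fun p => s(p.2, p.2)
  virt x := x.isRight

variable {μ} (L : ℕ) (φ : c.E ⊕ c.E ≃ c.Port μ)

theorem card_fiber_portBase [Finite c.V] (v : c.V) :
    Nat.card {x : c.Port μ // c.portBase μ x = v} = 2 * (μ v + 1) := by
  rw [Nat.card_congr Equiv.subtypeSum, Nat.card_sum]
  simp only [portBase, Sum.elim_inl, Sum.elim_inr, Nat.card_congr (Equiv.sigmaSubtype v),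
    Nat.card_eq_fintype_card, Fintype.card_fin]
  ring

theorem ladder_isFinite [Finite c.V] [Finite c.E] : (c.ladder μ L φ).IsFinite :=
  ⟨inferInstanceAs (Finite (c.Port μ)),
    inferInstanceAs (Finite (c.E ⊕ c.Rung μ ⊕ c.Port μ ⊕ Fin L × c.Port μ))⟩

theorem ladder_degree [Finite c.V] [Finite c.E] (x : c.Port μ) :
    (c.ladder μ L φ).degree x = 2 * L + 4 := by
  show Multigraph.degree ⟨_, _, Sum.elim _ (Sum.elim _ (Sum.elim _ _))⟩ x = _
  rw [degree_sumElim, degree_sumElim, degree_sumElim, degree_matching φ,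
    show Multigraph.degree ⟨c.Port μ, c.Rung μ, fun r => s(.inl r, .inr r)⟩ x = 1 from
      degree_matching (Equiv.refl _) x, degree_perm, degree_loops, Nat.card_fin]
  ring

theorem ladder_portBase_eq_of_virtAdj {u w : c.Port μ} (h : (c.ladder μ L φ).VirtAdj u w) :
    c.portBase μ u = c.portBase μ w := by
  obtain ⟨x, hx, he⟩ := h
  have : (((c.ladder μ L φ).ends x).map (c.portBase μ)).IsDiag := by
    rcases x with e | r | (r | r) | p
    · exact absurd hx (by simp [ladder])
    all_goals rfl
  rw [he] at this
  exact this

theorem ladder_reach (x : c.Port μ) :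
    Relation.ReflTransGen (c.ladder μ L φ).VirtAdj (.inl ⟨c.portBase μ x, 0⟩) x := by
  have step : ∀ v (j : Fin (μ v + 1)),
      (c.ladder μ L φ).VirtAdj (.inl ⟨v, j⟩) (.inl ⟨v, j + 1⟩) ∧
        (c.ladder μ L φ).VirtAdj (.inr ⟨v, j⟩) (.inr ⟨v, j + 1⟩) := fun v j => by
    rw [← finRotate_apply]
    exact ⟨⟨.inr (.inr (.inl _)), rfl, rfl⟩, ⟨.inr (.inr (.inl _)), rfl, rfl⟩⟩
  have path : ∀ v (j : Fin (μ v + 1)),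
      Relation.ReflTransGen (c.ladder μ L φ).VirtAdj (.inl ⟨v, 0⟩) (.inl ⟨v, j⟩) ∧
        Relation.ReflTransGen (c.ladder μ L φ).VirtAdj (.inr ⟨v, 0⟩) (.inr ⟨v, j⟩) := by
    intro v j
    induction j using Fin.induction with
    | zero => exact ⟨.refl, .refl⟩
    | succ i ih =>
      rw [← Fin.coeSucc_eq_succ]
      exact ⟨ih.1.tail (step v _).1, ih.2.tail (step v _).2⟩
  rcases x with ⟨v, j⟩ | ⟨v, j⟩
  · exact (path v j).1
  · exact .head ⟨.inr (.inl ⟨v, 0⟩), rfl, rfl⟩ (path v j).2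

theorem ladder_reducesTo {src tgt : c.E → c.V} (hst : ∀ e, c.ends e = s(src e, tgt e))
    (hφ : ∀ d, c.portBase μ (φ d) = Sum.elim src tgt d) : ReducesTo (c.ladder μ L φ) c := by
  refine ⟨c.portBase μ,
    (Equiv.subtypeEquivRight fun x => by cases x <;> simp [ladder]).trans Equiv.sumIsLeft,
    fun v => ⟨.inl ⟨v, 0⟩, rfl⟩, fun u w => ⟨fun h => ?_, fun h => ?_⟩, ?_⟩
  · exact (Std.Symm.symm _ _ (c.ladder_reach L φ u)).trans (h ▸ c.ladder_reach L φ w)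
  · induction h with
    | refl => rfl
    | tail _ huw ih => exact ih.trans (c.ladder_portBase_eq_of_virtAdj L φ huw)
  · rintro ⟨e | y, h⟩
    · show c.ends e = Sym2.map _ s(φ (.inl e), φ (.inr e))
      rw [Sym2.map_mk, hφ, hφ]
      exact hst e
    · simp [ladder] at h

end Multigraph

/-- For `n` even, the reduction map `π_n` from finite connected labelled `n`-regular
multigraphs to finite connected multigraphs has image exactly the set of connected
multigraphs all of whose vertices have even degree. -/
theorem reduction_image_of_even (n : ℕ) (heven : Even n) (hn : 3 ≤ n)
    (c : Multigraph) (hfin : c.IsFinite) (hconn : c.Connected) :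
    (∃ G : LabelledGraph, G.toMultigraph.IsFinite ∧ G.toMultigraph.Connected ∧
      (∀ v : G.V, G.toMultigraph.degree v = n) ∧ ReducesTo G c) ↔
    (∀ v : c.V, Even (c.degree v)) := by
  have := hfin.1
  have := hfin.2
  refine ⟨fun ⟨G, hGfin, _, hreg, hred⟩ => hred.even_degree hGfin fun v => hreg v ▸ heven,
    fun hdeg => ?_⟩
  obtain ⟨L, rfl⟩ : ∃ L, n = 2 * L + 4 := by
    obtain ⟨k, rfl⟩ := heven
    exact ⟨k - 2, by omega⟩
  by_cases hiso : ∃ v, c.degree v = 0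
  · obtain ⟨v, hv⟩ := hiso
    have := hconn.subsingleton_of_degree_eq_zero hv
    have := isEmpty_edge_of_degree_eq_zero hv
    have hred := reducesTo_virtualLoops c (L + 2)
    exact ⟨_, ⟨‹_›, inferInstanceAs (Finite (Fin _ × c.V))⟩, hred.connected hconn,
      fun u => (LabelledGraph.degree_virtualLoops _ _ u).trans (by ring), hred⟩
  · push Not at hiso
    obtain ⟨src, tgt, hst⟩ := c.exists_ends_eq
    have hμ : ∀ v, c.degree v = 2 * (c.degree v / 2 - 1 + 1) := fun v => by
      obtain ⟨k, hk⟩ := hdeg v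
      have := hiso v
      omega
    obtain ⟨φ, hφ⟩ := exists_equiv_apply_eq_of_card_fiber (f := Sum.elim src tgt)
      (g := c.portBase fun v => c.degree v / 2 - 1) fun v => by
        rw [card_fiber_sumElim hst, card_fiber_portBase, ← hμ]
    have hred := c.ladder_reducesTo L φ hst hφ
    exact ⟨_, c.ladder_isFinite L φ, hred.connected hconn, c.ladder_degree L φ, hred⟩
end

section
/- Every spin foam molecule is a dimensionally homogeneous, strongly connected abstract simplicial 2-complex: each face is a triple of vertices (v, v̄, v̂) drawn from the three parts of a tripartite vertex set, all pairs within each face are edges of the complex, every vertex lies in at least one 2-face, and any two 2-faces are joined by a chain of 2-faces successively sharing an edge. -/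
/-- A bisected boundary graph, presented bipartitely: boundary vertices `V̄`, bivalent
bisecting vertices `V̂`, and edges, each joining a boundary vertex (`src`) to a bisecting
vertex (`tgt`); every bisecting vertex lies on exactly two edges, every boundary vertex
lies on at least one edge, and the graph is connected. -/
structure BBGraph where
  Vbar : Type
  Vhat : Type
  E : Type
  src : E → Vbar
  tgt : E → Vhat
  hat_bivalent : ∀ h : Vhat, Nat.card {e : E // tgt e = h} = 2
  bar_covered : ∀ v : Vbar, ∃ e : E, src e = v
  nonempty_hat : Nonempty Vhat
  conn : ∀ x y : Vbar ⊕ Vhat,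
    Relation.ReflTransGen
      (fun a b => ∃ e : E, (a = Sum.inl (src e) ∧ b = Sum.inr (tgt e)) ∨
        (b = Sum.inl (src e) ∧ a = Sum.inr (tgt e))) x y

/-- A spin foam molecule: a collection of spin foam atoms (each determined by its bisected
boundary graph, with one bulk vertex and one triangular face per boundary edge) quotiented
by bonding maps.  The bondings are recorded by the equivalence relations `idbar`, `idhat`,
`idE` identifying boundary vertices, bisecting vertices and boundary edges of the atoms,
compatibly with sources and targets, and identifying patches in full. -/
structure SFMolecule where
  ι : Type
  nonempty_atoms : Nonempty ι
  atom : ι → BBGraph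
  idbar : Setoid (Σ i : ι, (atom i).Vbar)
  idhat : Setoid (Σ i : ι, (atom i).Vhat)
  idE : Setoid (Σ i : ι, (atom i).E)
  src_compat : ∀ e e' : Σ i : ι, (atom i).E, idE.r e e' →
    idbar.r ⟨e.1, (atom e.1).src e.2⟩ ⟨e'.1, (atom e'.1).src e'.2⟩
  tgt_compat : ∀ e e' : Σ i : ι, (atom i).E, idE.r e e' →
    idhat.r ⟨e.1, (atom e.1).tgt e.2⟩ ⟨e'.1, (atom e'.1).tgt e'.2⟩
  patch_full : ∀ v v' : Σ i : ι, (atom i).Vbar, idbar.r v v' →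
    ∀ e : (atom v.1).E, (atom v.1).src e = v.2 →
      ∃ e' : (atom v'.1).E, (atom v'.1).src e' = v'.2 ∧ idE.r ⟨v.1, e⟩ ⟨v'.1, e'⟩

namespace SFMolecule

/-- The vertices of the molecule: one bulk vertex per atom, together with the classes of
boundary vertices and of bisecting vertices (the tripartite vertex set `V ∪ V̄ ∪ V̂`). -/
def Vtx (m : SFMolecule) : Type :=
  m.ι ⊕ (Quotient m.idbar ⊕ Quotient m.idhat)

/-- The 2-faces of the molecule: one triangle per boundary edge of each atom. -/
def Face (m : SFMolecule) : Type := Σ i : m.ι, (m.atom i).E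

/-- The vertex set of a face: the triple `(v, v̄, v̂)`. -/
def verts (m : SFMolecule) (f : m.Face) : Set m.Vtx :=
  {Sum.inl f.1,
   Sum.inr (Sum.inl (Quotient.mk m.idbar ⟨f.1, (m.atom f.1).src f.2⟩)),
   Sum.inr (Sum.inr (Quotient.mk m.idhat ⟨f.1, (m.atom f.1).tgt f.2⟩))}

/-- The simplices of the resulting complex: all subsets of vertex sets of faces. -/
def simplices (m : SFMolecule) : Set (Set m.Vtx) := {s | ∃ f : m.Face, s ⊆ m.verts f}

end SFMolecule


/-!
Each atom contributes the cone over its boundary graph. Two triangles of one atom whose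
boundary edges share an endpoint share the edge from the bulk vertex to that endpoint, so
connectivity of the boundary graph (transferred to its line graph) makes the triangles of an
atom strongly connected. A bonding of two boundary vertices identifies a full patch, hence
some boundary edge of one atom with a boundary edge of the other; the two triangles over them
share the edge `(v̄, v̂)`. Connectivity of the atoms under bonding then chains these together.
-/

namespace BBGraph

variable (b : BBGraph)

def Adj (x y : b.Vbar ⊕ b.Vhat) : Prop :=
  ∃ e : b.E, (x = Sum.inl (b.src e) ∧ y = Sum.inr (b.tgt e)) ∨
    (y = Sum.inl (b.src e) ∧ x = Sum.inr (b.tgt e))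

def Incident (x : b.Vbar ⊕ b.Vhat) (e : b.E) : Prop :=
  x = Sum.inl (b.src e) ∨ x = Sum.inr (b.tgt e)

def EdgeAdj (e e' : b.E) : Prop :=
  b.src e = b.src e' ∨ b.tgt e = b.tgt e'

lemma exists_tgt_eq (h : b.Vhat) : ∃ e : b.E, b.tgt e = h := by
  have : Nonempty {e : b.E // b.tgt e = h} :=
    (Nat.card_pos_iff.mp (by rw [b.hat_bivalent h]; norm_num)).1
  obtain ⟨⟨e, he⟩⟩ := this
  exact ⟨e, he⟩

lemma edgeAdj_of_incident {x : b.Vbar ⊕ b.Vhat} {e e' : b.E}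
    (he : b.Incident x e) (he' : b.Incident x e') : b.EdgeAdj e e' := by
  rcases he with rfl | rfl <;> rcases he' with h | h <;> simp_all [EdgeAdj]

lemma Adj.exists_incident {x y : b.Vbar ⊕ b.Vhat} (h : b.Adj x y) :
    ∃ e, b.Incident x e ∧ b.Incident y e := by
  obtain ⟨e, ⟨hx, hy⟩ | ⟨hy, hx⟩⟩ := h
  · exact ⟨e, .inl hx, .inr hy⟩
  · exact ⟨e, .inr hx, .inl hy⟩

lemma reflTransGen_edgeAdj_of_reflTransGen_adj {x y : b.Vbar ⊕ b.Vhat}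
    (hxy : Relation.ReflTransGen b.Adj x y) {e e' : b.E}
    (he : b.Incident x e) (he' : b.Incident y e') :
    Relation.ReflTransGen b.EdgeAdj e e' := by
  induction hxy generalizing e' with
  | refl => exact .single (b.edgeAdj_of_incident he he')
  | tail _ hyz ih =>
    obtain ⟨g, hy, hz⟩ := hyz.exists_incident
    exact (ih hy).tail (b.edgeAdj_of_incident hz he')

lemma reflTransGen_edgeAdj (e e' : b.E) : Relation.ReflTransGen b.EdgeAdj e e' :=
  b.reflTransGen_edgeAdj_of_reflTransGen_adj (b.conn _ _) (.inl rfl) (.inl rfl)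

end BBGraph

namespace SFMolecule

variable (m : SFMolecule)

def barVtx (v : Σ i : m.ι, (m.atom i).Vbar) : m.Vtx := Sum.inr (Sum.inl ⟦v⟧)

def hatVtx (v : Σ i : m.ι, (m.atom i).Vhat) : m.Vtx := Sum.inr (Sum.inr ⟦v⟧)

def Bonded (i j : m.ι) : Prop :=
  ∃ (v : (m.atom i).Vbar) (w : (m.atom j).Vbar), m.idbar.r ⟨i, v⟩ ⟨j, w⟩

def FaceAdj (f f' : m.Face) : Prop :=
  ∃ x y : m.Vtx, x ≠ y ∧ x ∈ m.verts f ∧ y ∈ m.verts f ∧ x ∈ m.verts f' ∧ y ∈ m.verts f'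

lemma verts_eq (f : m.Face) :
    m.verts f = {Sum.inl f.1, m.barVtx ⟨f.1, (m.atom f.1).src f.2⟩,
      m.hatVtx ⟨f.1, (m.atom f.1).tgt f.2⟩} := rfl

lemma bulk_mem_verts (f : m.Face) : (Sum.inl f.1 : m.Vtx) ∈ m.verts f := .inl rfl

lemma barVtx_mem_verts (f : m.Face) : m.barVtx ⟨f.1, (m.atom f.1).src f.2⟩ ∈ m.verts f :=
  .inr (.inl rfl)

lemma hatVtx_mem_verts (f : m.Face) : m.hatVtx ⟨f.1, (m.atom f.1).tgt f.2⟩ ∈ m.verts f :=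
  .inr (.inr rfl)

lemma barVtx_ne_hatVtx (v : Σ i : m.ι, (m.atom i).Vbar) (w : Σ i : m.ι, (m.atom i).Vhat) :
    m.barVtx v ≠ m.hatVtx w :=
  fun h => Sum.inl_ne_inr (Sum.inr_injective h)

lemma card_verts (f : m.Face) : Nat.card (m.verts f) = 3 := by
  rw [Nat.card_coe_set_eq, Set.ncard_eq_three]
  exact ⟨_, _, _, Sum.inl_ne_inr, Sum.inl_ne_inr, m.barVtx_ne_hatVtx _ _, m.verts_eq f⟩

lemma exists_mem_verts (x : m.Vtx) : ∃ f : m.Face, x ∈ m.verts f := by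
  rcases x with i | q | q
  · obtain ⟨h⟩ := (m.atom i).nonempty_hat
    obtain ⟨e, -⟩ := (m.atom i).exists_tgt_eq h
    exact ⟨⟨i, e⟩, m.bulk_mem_verts _⟩
  · obtain ⟨⟨i, v⟩, rfl⟩ := Quotient.exists_rep q
    obtain ⟨e, rfl⟩ := (m.atom i).bar_covered v
    exact ⟨⟨i, e⟩, m.barVtx_mem_verts _⟩
  · obtain ⟨⟨i, v⟩, rfl⟩ := Quotient.exists_rep q
    obtain ⟨e, rfl⟩ := (m.atom i).exists_tgt_eq v
    exact ⟨⟨i, e⟩, m.hatVtx_mem_verts _⟩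

lemma faceAdj_of_edgeAdj {i : m.ι} {e e' : (m.atom i).E} (h : (m.atom i).EdgeAdj e e') :
    m.FaceAdj ⟨i, e⟩ ⟨i, e'⟩ := by
  rcases h with h | h
  · refine ⟨Sum.inl i, m.barVtx ⟨i, (m.atom i).src e⟩, Sum.inl_ne_inr,
      m.bulk_mem_verts _, m.barVtx_mem_verts _, m.bulk_mem_verts _, ?_⟩
    exact h ▸ m.barVtx_mem_verts ⟨i, e'⟩
  · refine ⟨Sum.inl i, m.hatVtx ⟨i, (m.atom i).tgt e⟩, Sum.inl_ne_inr,
      m.bulk_mem_verts _, m.hatVtx_mem_verts _, m.bulk_mem_verts _, ?_⟩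
    exact h ▸ m.hatVtx_mem_verts ⟨i, e'⟩

lemma reflTransGen_faceAdj_of_same_atom (i : m.ι) (e e' : (m.atom i).E) :
    Relation.ReflTransGen m.FaceAdj ⟨i, e⟩ ⟨i, e'⟩ :=
  Relation.ReflTransGen.lift (fun g : (m.atom i).E => (⟨i, g⟩ : m.Face))
    (fun _ _ => m.faceAdj_of_edgeAdj) _ _ ((m.atom i).reflTransGen_edgeAdj e e')

lemma faceAdj_of_idE {f f' : m.Face} (h : m.idE.r f f') : m.FaceAdj f f' := by
  refine ⟨m.barVtx ⟨f.1, _⟩, m.hatVtx ⟨f.1, _⟩, m.barVtx_ne_hatVtx _ _,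
    m.barVtx_mem_verts f, m.hatVtx_mem_verts f, ?_, ?_⟩
  · rw [barVtx, Quotient.sound (m.src_compat f f' h)]
    exact m.barVtx_mem_verts f'
  · rw [hatVtx, Quotient.sound (m.tgt_compat f f' h)]
    exact m.hatVtx_mem_verts f'

lemma exists_faceAdj_of_idbar {i j : m.ι} {v : (m.atom i).Vbar} {w : (m.atom j).Vbar}
    (h : m.idbar.r ⟨i, v⟩ ⟨j, w⟩) : ∃ e e', m.FaceAdj ⟨i, e⟩ ⟨j, e'⟩ := by
  obtain ⟨e, he⟩ := (m.atom i).bar_covered v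
  obtain ⟨e', -, hee'⟩ := m.patch_full ⟨i, v⟩ ⟨j, w⟩ h e he
  exact ⟨e, e', m.faceAdj_of_idE hee'⟩

lemma reflTransGen_faceAdj_of_reflTransGen_bonded {i j : m.ι}
    (hij : Relation.ReflTransGen m.Bonded i j) (e : (m.atom i).E) (e' : (m.atom j).E) :
    Relation.ReflTransGen m.FaceAdj ⟨i, e⟩ ⟨j, e'⟩ := by
  induction hij with
  | refl => exact m.reflTransGen_faceAdj_of_same_atom i e e'
  | tail _ hbond ih =>
    obtain ⟨_, _, hbond⟩ := hbond
    obtain ⟨g, g', hgg'⟩ := m.exists_faceAdj_of_idbar hbond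
    exact ((ih g).tail hgg').trans (m.reflTransGen_faceAdj_of_same_atom _ g' e')

end SFMolecule

/-- Every (connected) spin foam molecule is a dimensionally homogeneous, strongly
connected abstract simplicial 2-complex: each face is a triple of (distinct) vertices
drawn from the three parts of the tripartite vertex set, all pairs within each face are
edges of the complex (the complex is downward closed), every vertex lies in at least one
2-face, and any two 2-faces are joined by a chain of 2-faces successively sharing an
edge. -/
theorem spinFoamMolecule_homogeneous_strongly_connected (m : SFMolecule)
    (hconn : ∀ i j : m.ι,
      Relation.ReflTransGen
        (fun a b => ∃ (va : (m.atom a).Vbar) (vb : (m.atom b).Vbar),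
          m.idbar.r ⟨a, va⟩ ⟨b, vb⟩) i j) :
    (∀ s ∈ m.simplices, ∀ t : Set m.Vtx, t ⊆ s → t ∈ m.simplices) ∧
    (∀ f : m.Face, Nat.card ↥(m.verts f) = 3) ∧
    (∀ f : m.Face, ∀ x ∈ m.verts f, ∀ y ∈ m.verts f, ({x, y} : Set m.Vtx) ∈ m.simplices) ∧
    (∀ v : m.Vtx, ∃ f : m.Face, v ∈ m.verts f) ∧
    (∀ f f' : m.Face,
      Relation.ReflTransGen
        (fun a b => ∃ x y : m.Vtx, x ≠ y ∧
          x ∈ m.verts a ∧ y ∈ m.verts a ∧ x ∈ m.verts b ∧ y ∈ m.verts b) f f') := by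
  refine ⟨?_, m.card_verts, ?_, m.exists_mem_verts, ?_⟩
  · rintro s ⟨f, hs⟩ t hts
    exact ⟨f, hts.trans hs⟩
  · rintro f x hx y hy
    exact ⟨f, Set.insert_subset hx (Set.singleton_subset_iff.mpr hy)⟩
  · rintro ⟨i, e⟩ ⟨j, e'⟩
    exact m.reflTransGen_faceAdj_of_reflTransGen_bonded (hconn i j) e e'
end

section
/- Let c be a connected multigraph in which every vertex has degree n, and suppose c has at least one loop at some vertex v̄ with at most ⌊n/2⌋ loops at v̄. Then there is a sequence of expansion and creation moves (a (1–n)-move) producing a labelled n-regular multigraph c' with strictly fewer loops than c that reduces back to c under contraction and deletion of the added virtual edges; iterating, every labelled n-regular graph class π_n⁻¹(c) contains a loopless representative. -/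
/-!
A vertex `w` carrying `k ≥ 1` loops and `m` other edge-ends (so `2k + m = n`) is split into three
vertices joined by virtual edges: the loops become ordinary edges between two of the new vertices,
and virtual edges are added so that all three vertices have degree `n` again. Contracting the
virtual edges undoes the split, so the reduced graph is unchanged, while the number of loops drops
by `k`. Iterating on any vertex with a loop terminates in a loopless representative.
-/

theorem Sym2.isDiag_iff_exists_eq_mk {α : Type*} {z : Sym2 α} : z.IsDiag ↔ ∃ x, z = s(x, x) :=
  ⟨fun h => ⟨z.diagElem h, (Sym2.diag_diagElem h).symm⟩,
    fun ⟨x, hx⟩ => hx ▸ Sym2.diag_isDiag x⟩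

instance Multigraph.instSymmAdj (M : Multigraph) : Std.Symm M.Adj :=
  ⟨fun _ _ ⟨e, he⟩ => ⟨e, he.trans Sym2.eq_swap⟩⟩

instance LabelledGraph.instSymmVirtAdj (G : LabelledGraph) : Std.Symm G.VirtAdj :=
  ⟨fun _ _ ⟨e, hv, he⟩ => ⟨e, hv, he.trans Sym2.eq_swap⟩⟩

namespace Multigraph

variable {V W E E' : Type}

theorem degree_sumElim_s19 [Finite E] [Finite E'] (f : E → Sym2 V) (g : E' → Sym2 V) (v : V) :
    (mk V (E ⊕ E') (Sum.elim f g)).degree v = (mk V E f).degree v + (mk V E' g).degree v := by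
  simp only [degree, Nat.card_congr Equiv.subtypeSum, Nat.card_sum, Sum.elim_inl, Sum.elim_inr]
  ring

theorem degree_comp_equiv (σ : E' ≃ E) (f : E → Sym2 V) (v : V) :
    (mk V E' (f ∘ σ)).degree v = (mk V E f).degree v := by
  simp only [degree]
  congr 1 <;> exact Nat.card_congr (σ.subtypeEquiv fun _ => Iff.rfl)

theorem degree_eq_add_compl [Finite E] (f : E → Sym2 V) (p : E → Prop) (v : V) :
    (mk V E f).degree v =
      (mk V {e // p e} (f ∘ (↑))).degree v + (mk V {e // ¬ p e} (f ∘ (↑))).degree v := by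
  classical
  rw [← degree_sumElim_s19, ← degree_comp_equiv (Equiv.sumCompl p)]
  congr 2
  funext e
  cases e <;> rfl

theorem degree_eq_zero {f : E → Sym2 V} {v : V} (h : ∀ e, v ∉ f e) :
    (mk V E f).degree v = 0 := by
  have hloop (e : E) : f e ≠ s(v, v) := fun he => h e (he ▸ Sym2.mem_mk_left v v)
  simp only [degree, Nat.add_eq_zero_iff, Nat.card_eq_zero]
  exact ⟨.inl ⟨fun e => h e.1 e.2⟩, .inl ⟨fun e => hloop e.1 e.2⟩⟩

theorem degree_const_eq_zero {a b x : V} (ha : x ≠ a) (hb : x ≠ b) :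
    (mk V E fun _ => s(a, b)).degree x = 0 :=
  degree_eq_zero fun _ h => (Sym2.mem_iff.mp h).elim ha hb

theorem degree_map_eq_zero {φ : V → W} {x : W} (hx : ∀ v, φ v ≠ x) (f : E → Sym2 V) :
    (mk W E (Sym2.map φ ∘ f)).degree x = 0 :=
  degree_eq_zero fun _ h => by
    obtain ⟨v, -, hv⟩ := Sym2.mem_map.mp h
    exact hx v hv

theorem degree_const_left {a b : V} (hab : a ≠ b) :
    (mk V E fun _ => s(a, b)).degree a = Nat.card E := by
  simp only [degree, Sym2.mem_mk_left, Sym2.eq_iff, hab.symm, and_false, or_self,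
    Nat.card_congr (Equiv.subtypeUnivEquiv fun _ => trivial), Nat.card_of_isEmpty, add_zero]

theorem degree_const_right {a b : V} (hab : a ≠ b) :
    (mk V E fun _ => s(a, b)).degree b = Nat.card E := by
  rw [show (fun _ : E => s(a, b)) = fun _ => s(b, a) from funext fun _ => Sym2.eq_swap]
  exact degree_const_left hab.symm

theorem degree_const_loop (a : V) : (mk V E fun _ => s(a, a)).degree a = 2 * Nat.card E := by
  simp only [degree, Sym2.mem_mk_left, Nat.card_congr (Equiv.subtypeUnivEquiv fun _ => trivial)]
  ring

theorem degree_map_apply {φ : V → W} (hφ : φ.Injective) (f : E → Sym2 V) (v : V) :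
    (mk W E (Sym2.map φ ∘ f)).degree (φ v) = (mk V E f).degree v := by
  simp only [degree, Function.comp_apply, ← Sym2.map_mk, (Sym2.map.injective hφ).eq_iff]
  simp [Sym2.mem_map, hφ.eq_iff]

end Multigraph

namespace LabelledGraph

open Multigraph Relation

variable (G : LabelledGraph) (w : G.V)

abbrev LoopsAt : Type := {e : G.E // G.ends e = s(w, w)}

abbrev NonLoopsAt : Type := {e : G.E // ¬ G.ends e = s(w, w)}

abbrev LinksAt : Type := {e : G.E // ¬ G.ends e = s(w, w) ∧ w ∈ G.ends e}

noncomputable def rerouteEnds (e : G.E) : Sym2 (G.V ⊕ Fin 2) :=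
  open Classical in
  if G.ends e = s(w, w) then s(.inr 0, .inr 1) else (G.ends e).map .inl

/-- The vertex `w` is kept as `inl w` and joined by two new vertices `inr 0`, `inr 1`. Each loop at
`w` becomes an edge `inr 0 — inr 1` with its label, and the added virtual edges are one
`inr 0 — inr 1` per non-loop edge at `w` and, per loop at `w`, one `inr 0 — inl w` and one
`inr 1 — inl w`: so each of the three vertices has the degree of `w`, and contracting the virtual
edges gives back `w`. -/
noncomputable def splitLoops : LabelledGraph where
  V := G.V ⊕ Fin 2
  E := G.E ⊕ (LinksAt G w ⊕ (LoopsAt G w ⊕ LoopsAt G w))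
  ends := Sum.elim (rerouteEnds G w) <| Sum.elim (fun _ => s(.inr 0, .inr 1)) <|
    Sum.elim (fun _ => s(.inr 0, .inl w)) (fun _ => s(.inr 1, .inl w))
  virt := Sum.elim G.virt fun _ => True

def unsplit : G.V ⊕ Fin 2 → G.V := Sum.elim id fun _ => w

theorem map_unsplit_rerouteEnds (e : G.E) :
    (rerouteEnds G w e).map (unsplit G w) = G.ends e := by
  unfold rerouteEnds
  split_ifs with h
  · exact h.symm
  · rw [Sym2.map_map]
    exact congrFun Sym2.map_id' _

theorem map_unsplit_splitLoops_ends_inr (e : LinksAt G w ⊕ (LoopsAt G w ⊕ LoopsAt G w)) :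
    ((splitLoops G w).ends (.inr e)).map (unsplit G w) = s(w, w) := by
  rcases e with _ | _ | _ <;> rfl

theorem splitLoops_ends_inl_eq_or {e : G.E} {a b : G.V} (he : G.ends e = s(a, b)) :
    a = b ∨ (splitLoops G w).ends (.inl e) = s(.inl a, .inl b) := by
  by_cases h : G.ends e = s(w, w)
  · obtain ⟨rfl, rfl⟩ | ⟨rfl, rfl⟩ := Sym2.eq_iff.mp (h.symm.trans he) <;> exact .inl rfl
  · exact .inr ((if_neg h).trans (he ▸ Sym2.map_mk _ a b))

def realEdgesEquiv : {e // ¬ (splitLoops G w).virt e} ≃ {e // ¬ G.virt e} :=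
  Equiv.subtypeSum.trans (@Equiv.sumEmpty _ _ ⟨fun e => e.2 trivial⟩)

theorem degree_nonLoopsAt_self :
    (Multigraph.mk G.V (NonLoopsAt G w) (G.ends ∘ (↑))).degree w = Nat.card (LinksAt G w) := by
  have : IsEmpty {e : NonLoopsAt G w // G.ends e = s(w, w)} := ⟨fun e => e.1.2 e.2⟩
  simp only [degree, Function.comp_apply, Nat.card_of_isEmpty, add_zero]
  exact Nat.card_congr <|
    Equiv.subtypeSubtypeEquivSubtypeInter (fun e => ¬ G.ends e = s(w, w)) (w ∈ G.ends ·)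

section Degree

variable [Finite G.E]

theorem degree_eq_loopsAt_add_nonLoopsAt (v : G.V) :
    G.degree v = (Multigraph.mk G.V (LoopsAt G w) fun _ => s(w, w)).degree v +
      (Multigraph.mk G.V (NonLoopsAt G w) (G.ends ∘ (↑))).degree v := by
  rw [← funext (fun e : LoopsAt G w => e.2)]
  exact degree_eq_add_compl G.ends _ v

theorem degree_rerouteEnds (x : G.V ⊕ Fin 2) :
    (Multigraph.mk _ G.E (rerouteEnds G w)).degree x =
      (Multigraph.mk _ (LoopsAt G w) fun _ => s(.inr 0, .inr 1)).degree x +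
        (Multigraph.mk _ (NonLoopsAt G w) (Sym2.map .inl ∘ G.ends ∘ (↑))).degree x := by
  classical
  rw [degree_eq_add_compl _ (fun e => G.ends e = s(w, w))]
  congr 3 <;> funext e
  · exact if_pos e.2
  · exact if_neg e.2

theorem degree_splitLoops (x : G.V ⊕ Fin 2) :
    (splitLoops G w).degree x = G.degree (unsplit G w x) := by
  simp only [splitLoops, degree_sumElim_s19, degree_rerouteEnds, degree_eq_loopsAt_add_nonLoopsAt G w]
  rcases x with v | i
  · simp only [unsplit, Sum.elim_inl, id, degree_map_apply Sum.inl_injective]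
    by_cases hv : v = w
    · subst hv
      simp (disch := simp) only [degree_const_eq_zero, degree_const_right, degree_const_loop]
      ring
    · simp (disch := simp [hv]) only [degree_const_eq_zero, zero_add, add_zero]
  · simp only [unsplit, Sum.elim_inr, degree_const_loop, degree_nonLoopsAt_self]
    match i with
    | 0 =>
      simp (disch := simp) only [degree_const_eq_zero, degree_const_left, degree_map_eq_zero]
      ring
    | 1 =>
      simp (disch := simp) only [degree_const_eq_zero, degree_const_left, degree_const_right,
        degree_map_eq_zero]
      ring

end Degree

variable {G w}

theorem reflTransGen_virtAdj_inl {a b : G.V} (h : ReflTransGen G.VirtAdj a b) :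
    ReflTransGen (splitLoops G w).VirtAdj (.inl a) (.inl b) := by
  refine h.lift' Sum.inl fun a b ⟨e, hv, he⟩ => ?_
  rcases splitLoops_ends_inl_eq_or G w he with rfl | h
  exacts [.refl, .single ⟨.inl e, hv, h⟩]

theorem reflTransGen_adj_inl {a b : G.V} (h : ReflTransGen G.Adj a b) :
    ReflTransGen (splitLoops G w).Adj (.inl a) (.inl b) := by
  refine h.lift' Sum.inl fun a b ⟨e, he⟩ => ?_
  rcases splitLoops_ends_inl_eq_or G w he with rfl | h
  exacts [.refl, .single ⟨.inl e, h⟩]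

theorem reflTransGen_virtAdj_inl_unsplit (hw : Nonempty (LoopsAt G w)) (x : (splitLoops G w).V) :
    ReflTransGen (splitLoops G w).VirtAdj x (.inl (unsplit G w x)) := by
  obtain ⟨l⟩ := hw
  match x with
  | .inl v => exact .refl
  | .inr 0 => exact .single ⟨.inr (.inr (.inl l)), trivial, rfl⟩
  | .inr 1 => exact .single ⟨.inr (.inr (.inr l)), trivial, rfl⟩

theorem reflTransGen_virtAdj_of_unsplit (hw : Nonempty (LoopsAt G w)) {x y : (splitLoops G w).V}
    (h : ReflTransGen G.VirtAdj (unsplit G w x) (unsplit G w y)) :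
    ReflTransGen (splitLoops G w).VirtAdj x y :=
  ((reflTransGen_virtAdj_inl_unsplit hw x).trans (reflTransGen_virtAdj_inl h)).trans
    (symm (reflTransGen_virtAdj_inl_unsplit hw y))

theorem reflTransGen_virtAdj_unsplit {x y : (splitLoops G w).V}
    (h : ReflTransGen (splitLoops G w).VirtAdj x y) :
    ReflTransGen G.VirtAdj (unsplit G w x) (unsplit G w y) := by
  refine h.lift' (unsplit G w) fun x y ⟨e, hv, he⟩ => ?_
  change ReflTransGen _ (unsplit G w x) (unsplit G w y)
  rcases e with e | e
  · exact .single ⟨e, hv, (map_unsplit_rerouteEnds G w e).symm.trans (congrArg _ he)⟩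
  · have hxy := he ▸ map_unsplit_splitLoops_ends_inr G w e
    obtain ⟨hx, hy⟩ | ⟨hx, hy⟩ := Sym2.eq_iff.mp hxy <;> rw [hx, hy]

theorem connected_splitLoops (hw : Nonempty (LoopsAt G w)) (hG : G.Connected) :
    (splitLoops G w).Connected := by
  refine ⟨⟨.inr 0⟩, fun x y => ?_⟩
  have hvirt : (splitLoops G w).VirtAdj ≤ (splitLoops G w).Adj :=
    fun _ _ ⟨e, _, he⟩ => ⟨e, he⟩
  have hx := ReflTransGen.mono hvirt _ _ (reflTransGen_virtAdj_inl_unsplit hw x)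
  have hy := ReflTransGen.mono hvirt _ _ (reflTransGen_virtAdj_inl_unsplit hw y)
  exact (hx.trans (reflTransGen_adj_inl (hG.2 _ _))).trans (symm hy)

theorem reducesTo_splitLoops (hw : Nonempty (LoopsAt G w)) {c : Multigraph}
    (hG : ReducesTo G c) : ReducesTo (splitLoops G w) c := by
  obtain ⟨q, fE, hq, hfib, hends⟩ := hG
  refine ⟨q ∘ unsplit G w, (realEdgesEquiv G w).trans fE, fun y => ?_, fun x y => ?_, ?_⟩
  · obtain ⟨v, rfl⟩ := hq y
    exact ⟨.inl v, rfl⟩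
  · exact ⟨fun h => reflTransGen_virtAdj_of_unsplit hw ((hfib _ _).mp h),
      fun h => (hfib _ _).mpr (reflTransGen_virtAdj_unsplit h)⟩
  · rintro ⟨e | e, h⟩
    · change c.ends (fE ⟨e, h⟩) = (rerouteEnds G w e).map (q ∘ unsplit G w)
      rw [hends, ← Sym2.map_map, map_unsplit_rerouteEnds]
    · exact absurd trivial h

theorem loopCount_splitLoops_lt [Finite G.E] (hw : Nonempty (LoopsAt G w)) :
    (splitLoops G w).loopCount < G.loopCount := by
  obtain ⟨l, hl⟩ := hw
  let otherLoops := {e : G.E | (∃ v, G.ends e = s(v, v)) ∧ ¬ G.ends e = s(w, w)}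
  have hsub : {e | ∃ x, (splitLoops G w).ends e = s(x, x)} ⊆ Sum.inl '' otherLoops := by
    rintro (e | (_ | _ | _)) he <;> have hd := Sym2.isDiag_iff_exists_eq_mk.mpr he
    · change (rerouteEnds G w e).IsDiag at hd
      unfold rerouteEnds at hd
      split_ifs at hd with h
      · exact absurd (Sym2.mk_isDiag_iff.mp hd) (by simp)
      · have hloop := (Sym2.isDiag_map Sum.inl_injective).mp hd
        exact ⟨e, ⟨Sym2.isDiag_iff_exists_eq_mk.mp hloop, h⟩, rfl⟩
    · exact absurd (Sym2.mk_isDiag_iff.mp hd) (Sum.inr_injective.ne (by decide))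
    all_goals exact absurd (Sym2.mk_isDiag_iff.mp hd) Sum.inr_ne_inl
  calc (splitLoops G w).loopCount ≤ (Sum.inl '' otherLoops).ncard :=
        Set.ncard_le_ncard hsub (otherLoops.toFinite.image _)
    _ = otherLoops.ncard := Set.ncard_image_of_injective _ Sum.inl_injective
    _ < G.loopCount := Set.ncard_lt_ncard ⟨fun e he => he.1, fun h => (h ⟨w, hl⟩).2 hl⟩
      (Set.toFinite _)

theorem isFinite_splitLoops (hG : G.IsFinite) : (splitLoops G w).IsFinite :=
  have := hG.1
  have := hG.2
  ⟨inferInstanceAs (Finite (G.V ⊕ Fin 2)), inferInstanceAs (Finite (G.E ⊕ _))⟩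

theorem exists_loopCount_lt {n : ℕ} {c : Multigraph} (hfin : G.IsFinite) (hconn : G.Connected)
    (hreg : ∀ v, G.degree v = n) (hred : ReducesTo G c) (hw : Nonempty (LoopsAt G w)) :
    ∃ G' : LabelledGraph, G'.IsFinite ∧ G'.Connected ∧ (∀ v, G'.degree v = n) ∧
      ReducesTo G' c ∧ G'.loopCount < G.loopCount :=
  have := hfin.2
  ⟨splitLoops G w, isFinite_splitLoops hfin, connected_splitLoops hw hconn,
    fun x => (degree_splitLoops G w x).trans (hreg _), reducesTo_splitLoops hw hred,
    loopCount_splitLoops_lt hw⟩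

theorem exists_loopless {n : ℕ} {c : Multigraph} (hfin : G.IsFinite) (hconn : G.Connected)
    (hreg : ∀ v, G.degree v = n) (hred : ReducesTo G c) :
    ∃ G' : LabelledGraph, G'.IsFinite ∧ G'.Connected ∧ (∀ v, G'.degree v = n) ∧
      ReducesTo G' c ∧ G'.Loopless := by
  induction hk : G.loopCount using Nat.strong_induction_on generalizing G with
  | _ k ih =>
    by_cases hG : G.Loopless
    · exact ⟨G, hfin, hconn, hreg, hred, hG⟩
    obtain ⟨e, v, he⟩ := not_forall_not.mp hG
    obtain ⟨G', hfin', hconn', hreg', hred', hlt⟩ :=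
      exists_loopCount_lt (w := v) hfin hconn hreg hred ⟨⟨e, he⟩⟩
    exact ih _ (hk ▸ hlt) hfin' hconn' hreg' hred' rfl

end LabelledGraph

theorem one_n_move_loop_removal_general (n : ℕ) :
    (∀ (G : LabelledGraph) (c : Multigraph),
      G.toMultigraph.IsFinite → G.toMultigraph.Connected →
      (∀ v : G.V, G.toMultigraph.degree v = n) → ReducesTo G c →
      ∀ w : G.V,
        1 ≤ Nat.card {e : G.E // G.toMultigraph.ends e = s(w, w)} →
        Nat.card {e : G.E // G.toMultigraph.ends e = s(w, w)} ≤ n / 2 →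
      ∃ G' : LabelledGraph, G'.toMultigraph.IsFinite ∧ G'.toMultigraph.Connected ∧
        (∀ v : G'.V, G'.toMultigraph.degree v = n) ∧ ReducesTo G' c ∧
        G'.loopCount < G.loopCount) ∧
    (∀ (G : LabelledGraph) (c : Multigraph),
      G.toMultigraph.IsFinite → G.toMultigraph.Connected →
      (∀ v : G.V, G.toMultigraph.degree v = n) → ReducesTo G c →
      ∃ G' : LabelledGraph, G'.toMultigraph.IsFinite ∧ G'.toMultigraph.Connected ∧
        (∀ v : G'.V, G'.toMultigraph.degree v = n) ∧ ReducesTo G' c ∧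
        G'.Loopless) :=
  ⟨fun _ _ hfin hconn hreg hred _ hk _ =>
    LabelledGraph.exists_loopCount_lt hfin hconn hreg hred (Nat.card_pos_iff.mp hk).1,
   fun _ _ => LabelledGraph.exists_loopless⟩

/-- The `(1–n)`-move: a loop at a vertex of a labelled `n`-regular graph can always be
removed by a sequence of expansion and creation moves producing another labelled
`n`-regular graph with strictly fewer loops that reduces to the same unlabelled graph;
iterating, every class `π_n⁻¹(c)` of labelled `n`-regular graphs reducing to a given
connected multigraph `c` contains a loopless representative. -/
theorem one_n_move_loop_removal (n : ℕ) (hn : 3 ≤ n) :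
    (∀ (G : LabelledGraph) (c : Multigraph),
      G.toMultigraph.IsFinite → G.toMultigraph.Connected →
      (∀ v : G.V, G.toMultigraph.degree v = n) → ReducesTo G c →
      ∀ w : G.V,
        1 ≤ Nat.card {e : G.E // G.toMultigraph.ends e = s(w, w)} →
        Nat.card {e : G.E // G.toMultigraph.ends e = s(w, w)} ≤ n / 2 →
      ∃ G' : LabelledGraph, G'.toMultigraph.IsFinite ∧ G'.toMultigraph.Connected ∧
        (∀ v : G'.V, G'.toMultigraph.degree v = n) ∧ ReducesTo G' c ∧
        G'.loopCount < G.loopCount) ∧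
    (∀ (G : LabelledGraph) (c : Multigraph),
      G.toMultigraph.IsFinite → G.toMultigraph.Connected →
      (∀ v : G.V, G.toMultigraph.degree v = n) → ReducesTo G c →
      ∃ G' : LabelledGraph, G'.toMultigraph.IsFinite ∧ G'.toMultigraph.Connected ∧
        (∀ v : G'.V, G'.toMultigraph.degree v = n) ∧ ReducesTo G' c ∧
        G'.Loopless) :=
  one_n_move_loop_removal_general n
end
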